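/- Let r, μ ∈ ℝ, σ ≠ 0, γ > 0 with γ ≠ 1, α ∉ {0,1} with α/(1−γ) > 0 and (1/α − 1)·(1−γ) ≥ 0, 0 ≤ λ ≤ 1, and ρ₁ ≥ ρ₂. Suppose (θ₁, θ₂) is a positive solution of the Epstein–Zin equilibrium ODE system (M-HJB) on [t₀,T], where 0 ≤ t₀ < T. Then, with δ := exp( −T·|1−γ|·| r − ρ₁/α + (μ−r)²/(2γσ²) | ), one has θ₂(t) ≥ θ₁(t) ≥ δ > 0 for every t ∈ [t₀,T]. -/

import Mathlib

noncomputable section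

/-- `S(t) = λ θ₁(t) + (1-λ) θ₂(t)`. -/
def mhjbS (lam : ℝ) (θ₁ θ₂ : ℝ → ℝ) (t : ℝ) : ℝ :=
  lam * θ₁ t + (1 - lam) * θ₂ t

/-- `D(t) = λ θ₁(t)^β + (1-λ) θ₂(t)^β` with `β = (1-γ-α)/(1-γ)` (real powers). -/
def mhjbD (γ α lam : ℝ) (θ₁ θ₂ : ℝ → ℝ) (t : ℝ) : ℝ :=
  lam * θ₁ t ^ ((1 - γ - α) / (1 - γ)) + (1 - lam) * θ₂ t ^ ((1 - γ - α) / (1 - γ))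

/-- `C(t) = S(t)^{1/(α-1)} D(t)^{-1/(α-1)}` (real powers). -/
def mhjbC (γ α lam : ℝ) (θ₁ θ₂ : ℝ → ℝ) (t : ℝ) : ℝ :=
  mhjbS lam θ₁ θ₂ t ^ ((1 : ℝ) / (α - 1)) * mhjbD γ α lam θ₁ θ₂ t ^ (-((1 : ℝ) / (α - 1)))

/-- A positive solution of the Epstein–Zin equilibrium ODE system (M-HJB) on `[t₀, T]`:
differentiable positive functions `θ₁, θ₂` with continuous derivatives `θ₁', θ₂'` such that,
for `i = 1, 2` and all `t ∈ [t₀, T]`,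
`θᵢ'(t) + (1-γ)θᵢ(t)[r + (μ-r)²/(2γσ²) - C(t)] - (1-γ)ρᵢ α⁻¹ θᵢ(t)
  + α⁻¹(1-γ) θᵢ(t)^β S(t)^{α/(α-1)} D(t)^{-α/(α-1)} = 0`,
with terminal conditions `θ₁(T) = θ₂(T) = 1`. -/
def IsMHJBSolution (r μ σ ρ₁ ρ₂ γ α lam t₀ T : ℝ) (θ₁ θ₂ : ℝ → ℝ) : Prop :=
  ∃ θ₁' θ₂' : ℝ → ℝ,
    ContinuousOn θ₁' (Set.Icc t₀ T) ∧ ContinuousOn θ₂' (Set.Icc t₀ T) ∧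
    (∀ t ∈ Set.Icc t₀ T, HasDerivWithinAt θ₁ (θ₁' t) (Set.Icc t₀ T) t) ∧
    (∀ t ∈ Set.Icc t₀ T, HasDerivWithinAt θ₂ (θ₂' t) (Set.Icc t₀ T) t) ∧
    (∀ t ∈ Set.Icc t₀ T, 0 < θ₁ t) ∧ (∀ t ∈ Set.Icc t₀ T, 0 < θ₂ t) ∧
    θ₁ T = 1 ∧ θ₂ T = 1 ∧
    (∀ t ∈ Set.Icc t₀ T,
      θ₁' t
        + (1 - γ) * θ₁ t * (r + (μ - r) ^ 2 / (2 * γ * σ ^ 2) - mhjbC γ α lam θ₁ θ₂ t)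
        - (1 - γ) * ρ₁ * α⁻¹ * θ₁ t
        + α⁻¹ * (1 - γ) * θ₁ t ^ ((1 - γ - α) / (1 - γ))
          * mhjbS lam θ₁ θ₂ t ^ (α / (α - 1))
          * mhjbD γ α lam θ₁ θ₂ t ^ (-(α / (α - 1))) = 0) ∧
    (∀ t ∈ Set.Icc t₀ T,
      θ₂' t
        + (1 - γ) * θ₂ t * (r + (μ - r) ^ 2 / (2 * γ * σ ^ 2) - mhjbC γ α lam θ₁ θ₂ t)
        - (1 - γ) * ρ₂ * α⁻¹ * θ₂ t
        + α⁻¹ * (1 - γ) * θ₂ t ^ ((1 - γ - α) / (1 - γ))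
          * mhjbS lam θ₁ θ₂ t ^ (α / (α - 1))
          * mhjbD γ α lam θ₁ θ₂ t ^ (-(α / (α - 1))) = 0)

end

/-! Write `β = (1-γ-α)/(1-γ)`, which is `< 1`, and `E = S^{α/(α-1)} D^{-α/(α-1)} > 0`. Dividing the
`i`-th equation by `θᵢ` gives
`θᵢ'/θᵢ = (1-γ)(ρᵢ/α - r - (μ-r)²/(2γσ²) + C) - α⁻¹(1-γ) θᵢ^{β-1} E` with `α⁻¹(1-γ) > 0`,
so `log θ₁ - log θ₂` is nondecreasing wherever `θ₁ > θ₂`; as it vanishes at `T`, it is never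
positive, i.e. `θ₁ ≤ θ₂`.

For the lower bound, `θ₁ ≤ θ₂` gives `θ₁ D ≤ θ₁^β S`, and `E = C S / D`, so the consumption terms
satisfy `(1-γ) C θ₁ ≤ α⁻¹(1-γ) θ₁^β E` (when `1-γ > 0` because then `α⁻¹ ≥ 1`, when `1-γ < 0` by
signs). Hence `θ₁' ≤ κ θ₁` with `κ = |1-γ| |r - ρ₁/α + (μ-r)²/(2γσ²)|`, and a backward Grönwall
argument from `θ₁(T) = 1` yields `θ₁(t) ≥ exp(-κ(T-t)) ≥ exp(-κT)`. -/

open Set Real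

lemma mul_add_one_sub_mul_pos {lam x y : ℝ} (hx : 0 < x) (hy : 0 < y) (hl0 : 0 ≤ lam)
    (hl1 : lam ≤ 1) : 0 < lam * x + (1 - lam) * y :=
  convex_Ioi (0 : ℝ) hx hy hl0 (sub_nonneg.2 hl1) (add_sub_cancel _ _)

lemma mul_rpow_le_rpow_mul {x y β : ℝ} (hx : 0 < x) (hxy : x ≤ y) (hβ : β ≤ 1) :
    x * y ^ β ≤ x ^ β * y := by
  have hy : 0 < y := hx.trans_le hxy
  have h := rpow_le_rpow_of_nonpos hx hxy (sub_nonpos.2 hβ)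
  rw [rpow_sub_one hy.ne', rpow_sub_one hx.ne', div_le_div_iff₀ hy hx] at h
  linarith

lemma hasDerivAt_of_hasDerivWithinAt_Icc {f : ℝ → ℝ} {f' : ℝ → ℝ} {a b : ℝ}
    (hf : ∀ x ∈ Icc a b, HasDerivWithinAt f (f' x) (Icc a b) x) {x : ℝ} (hx : x ∈ Ioo a b) :
    HasDerivAt f (f' x) x :=
  (hf x (Ioo_subset_Icc_self hx)).hasDerivAt (Icc_mem_nhds hx.1 hx.2)

lemma nonpos_of_hasDerivWithinAt_nonneg_of_pos {f f' : ℝ → ℝ} {a b : ℝ}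
    (hf : ∀ x ∈ Icc a b, HasDerivWithinAt f (f' x) (Icc a b) x)
    (hf' : ∀ x ∈ Ioo a b, 0 < f x → 0 ≤ f' x) (hb : f b ≤ 0) :
    ∀ x ∈ Icc a b, f x ≤ 0 := by
  intro x hx
  by_contra! hfx
  have hcont : ContinuousOn f (Icc a b) := fun y hy => (hf y hy).continuousWithinAt
  -- `s` is the first time after `x` at which `f` has dropped to `f x / 2`.
  set A := Icc x b ∩ f ⁻¹' Iic (f x / 2)
  have hA : IsClosed A :=
    (hcont.mono (Icc_subset_Icc_left hx.1)).preimage_isClosed_of_isClosed isClosed_Icc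
      isClosed_Iic
  have hbA : b ∈ A := ⟨⟨hx.2, le_rfl⟩, by simp only [mem_preimage, mem_Iic]; linarith⟩
  have hbdd : BddBelow A := ⟨x, fun y hy => hy.1.1⟩
  set s := sInf A
  obtain ⟨⟨hxs_le, hsb⟩, hfs⟩ : s ∈ A := hA.csInf_mem ⟨b, hbA⟩ hbdd
  have hpos : ∀ y ∈ Ico x s, f x / 2 < f y := fun y hy => by
    by_contra! hfy
    exact (csInf_le hbdd ⟨⟨hy.1, hy.2.le.trans hsb⟩, hfy⟩).not_gt hy.2
  have hxs : x < s := hxs_le.lt_of_ne fun h => by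
    rw [← h] at hfs; simp only [mem_preimage, mem_Iic] at hfs; linarith
  have hmono : MonotoneOn f (Icc x s) := by
    have hsub : Ioo x s ⊆ Ioo a b := Ioo_subset_Ioo hx.1 hsb
    refine monotoneOn_of_hasDerivWithinAt_nonneg (convex_Icc x s) (f' := f')
      (hcont.mono (Icc_subset_Icc hx.1 hsb)) (fun y hy => ?_) (fun y hy => ?_) <;>
      rw [interior_Icc] at hy
    · exact (hasDerivAt_of_hasDerivWithinAt_Icc hf (hsub hy)).hasDerivWithinAt
    · exact hf' y (hsub hy) (by linarith [hpos y (Ioo_subset_Ico_self hy)])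
  have := hmono (left_mem_Icc.2 hxs.le) (right_mem_Icc.2 hxs.le) hxs.le
  simp only [mem_preimage, mem_Iic] at hfs
  linarith

lemma exp_mul_sub_mul_le_of_hasDerivWithinAt_le {g g' : ℝ → ℝ} {κ a b : ℝ}
    (hg : ∀ x ∈ Icc a b, HasDerivWithinAt g (g' x) (Icc a b) x)
    (hg' : ∀ x ∈ Ioo a b, g' x ≤ κ * g x) :
    ∀ x ∈ Icc a b, exp (κ * (x - b)) * g b ≤ g x := by
  intro x hx
  have hanti : AntitoneOn (fun y => exp (-(κ * y)) * g y) (Icc a b) := by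
    refine antitoneOn_of_hasDerivWithinAt_nonpos (convex_Icc a b)
      (f' := fun y => exp (-(κ * y)) * (g' y - κ * g y))
      ((by fun_prop : Continuous fun y => exp (-(κ * y))).continuousOn.mul
        fun y hy => (hg y hy).continuousWithinAt) (fun y hy => ?_) (fun y hy => ?_) <;>
      rw [interior_Icc] at hy
    · have hexp : HasDerivAt (fun y => exp (-(κ * y))) (exp (-(κ * y)) * -κ) y := by
        simpa using ((hasDerivAt_id y).const_mul κ).fun_neg.exp
      exact ((hexp.fun_mul (hasDerivAt_of_hasDerivWithinAt_Icc hg hy)).congr_deriv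
        (by ring)).hasDerivWithinAt
    · exact mul_nonpos_of_nonneg_of_nonpos (exp_pos _).le (by linarith [hg' y hy])
  have h := hanti hx (right_mem_Icc.2 (hx.1.trans hx.2)) hx.2
  simp only at h
  calc exp (κ * (x - b)) * g b = exp (κ * x) * (exp (-(κ * b)) * g b) := by
        rw [← mul_assoc, ← exp_add]; ring_nf
    _ ≤ exp (κ * x) * (exp (-(κ * x)) * g x) := by gcongr
    _ = g x := by rw [← mul_assoc, ← exp_add]; simp

lemma sub_div_le_one_of_div_pos {α c : ℝ} (h : 0 < α / c) : (c - α) / c ≤ 1 := by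
  have hc : c ≠ 0 := fun hc => by simp [hc] at h
  rw [sub_div, div_self hc]
  linarith

section MHJB

variable {r μ σ ρ₁ ρ₂ γ α lam t₀ T t : ℝ} {θ₁ θ₂ : ℝ → ℝ}

lemma mhjbS_pos (hl0 : 0 ≤ lam) (hl1 : lam ≤ 1) (h₁ : 0 < θ₁ t) (h₂ : 0 < θ₂ t) :
    0 < mhjbS lam θ₁ θ₂ t :=
  mul_add_one_sub_mul_pos h₁ h₂ hl0 hl1

lemma mhjbD_pos (hl0 : 0 ≤ lam) (hl1 : lam ≤ 1) (h₁ : 0 < θ₁ t) (h₂ : 0 < θ₂ t) :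
    0 < mhjbD γ α lam θ₁ θ₂ t :=
  mul_add_one_sub_mul_pos (rpow_pos_of_pos h₁ _) (rpow_pos_of_pos h₂ _) hl0 hl1

lemma mhjbC_pos (hS : 0 < mhjbS lam θ₁ θ₂ t) (hD : 0 < mhjbD γ α lam θ₁ θ₂ t) :
    0 < mhjbC γ α lam θ₁ θ₂ t :=
  mul_pos (rpow_pos_of_pos hS _) (rpow_pos_of_pos hD _)

lemma rpow_mul_rpow_eq_mhjbC_mul_div (hα1 : α ≠ 1) (hS : 0 < mhjbS lam θ₁ θ₂ t)
    (hD : 0 < mhjbD γ α lam θ₁ θ₂ t) :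
    mhjbS lam θ₁ θ₂ t ^ (α / (α - 1)) * mhjbD γ α lam θ₁ θ₂ t ^ (-(α / (α - 1)))
      = mhjbC γ α lam θ₁ θ₂ t * (mhjbS lam θ₁ θ₂ t / mhjbD γ α lam θ₁ θ₂ t) := by
  have hα : α / (α - 1) = 1 / (α - 1) + 1 := by
    field_simp [sub_ne_zero.2 hα1]
    ring
  rw [hα, neg_add, rpow_add hS, rpow_add hD, rpow_one, rpow_neg_one, mhjbC]
  ring

lemma mul_mhjbD_le (hl1 : lam ≤ 1) (h₁ : 0 < θ₁ t) (h₁₂ : θ₁ t ≤ θ₂ t)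
    (hβ : (1 - γ - α) / (1 - γ) ≤ 1) :
    θ₁ t * mhjbD γ α lam θ₁ θ₂ t ≤ θ₁ t ^ ((1 - γ - α) / (1 - γ)) * mhjbS lam θ₁ θ₂ t := by
  have h := mul_le_mul_of_nonneg_left (mul_rpow_le_rpow_mul h₁ h₁₂ hβ) (sub_nonneg.2 hl1)
  simp only [mhjbD, mhjbS]
  linarith

lemma mul_mhjbC_mul_le (hα1 : α ≠ 1) (hαγ : 0 < α / (1 - γ))
    (hsgn : 0 ≤ (1 / α - 1) * (1 - γ)) (hl0 : 0 ≤ lam) (hl1 : lam ≤ 1) (h₁ : 0 < θ₁ t)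
    (h₂ : 0 < θ₂ t) (h₁₂ : θ₁ t ≤ θ₂ t) :
    (1 - γ) * mhjbC γ α lam θ₁ θ₂ t * θ₁ t
      ≤ α⁻¹ * (1 - γ) * θ₁ t ^ ((1 - γ - α) / (1 - γ)) * mhjbS lam θ₁ θ₂ t ^ (α / (α - 1))
        * mhjbD γ α lam θ₁ θ₂ t ^ (-(α / (α - 1))) := by
  have hS := mhjbS_pos hl0 hl1 h₁ h₂
  have hD := mhjbD_pos (γ := γ) (α := α) hl0 hl1 h₁ h₂
  have hC := mhjbC_pos hS hD
  rcases div_pos_iff.1 hαγ with ⟨hα, hc⟩ | ⟨hα, hc⟩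
  · have hinv : 1 ≤ α⁻¹ := by
      have := nonneg_of_mul_nonneg_left hsgn hc
      rw [one_div] at this
      linarith
    have hθD := mul_mhjbD_le hl1 h₁ h₁₂ (sub_div_le_one_of_div_pos hαγ)
    rw [mul_assoc _ (mhjbS lam θ₁ θ₂ t ^ _), rpow_mul_rpow_eq_mhjbC_mul_div hα1 hS hD]
    calc (1 - γ) * mhjbC γ α lam θ₁ θ₂ t * θ₁ t
        ≤ (1 - γ) * mhjbC γ α lam θ₁ θ₂ t
          * (θ₁ t ^ ((1 - γ - α) / (1 - γ)) * mhjbS lam θ₁ θ₂ t / mhjbD γ α lam θ₁ θ₂ t) := by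
          gcongr
          rwa [le_div_iff₀ hD]
      _ ≤ α⁻¹ * ((1 - γ) * mhjbC γ α lam θ₁ θ₂ t
          * (θ₁ t ^ ((1 - γ - α) / (1 - γ)) * mhjbS lam θ₁ θ₂ t / mhjbD γ α lam θ₁ θ₂ t)) :=
          le_mul_of_one_le_left (by positivity) hinv
      _ = _ := by ring
  · have hl : (1 - γ) * mhjbC γ α lam θ₁ θ₂ t * θ₁ t < 0 :=
      mul_neg_of_neg_of_pos (mul_neg_of_neg_of_pos hc hC) h₁
    have hr : 0 < α⁻¹ * (1 - γ) * θ₁ t ^ ((1 - γ - α) / (1 - γ))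
        * mhjbS lam θ₁ θ₂ t ^ (α / (α - 1)) * mhjbD γ α lam θ₁ θ₂ t ^ (-(α / (α - 1))) := by
      have := mul_pos_of_neg_of_neg (inv_lt_zero.2 hα) hc
      positivity
    linarith

lemma mhjb_div_eq {c a K ρ β θ θ' X Y : ℝ} (hθ : 0 < θ)
    (h : θ' + c * θ * K - c * ρ * a * θ + a * c * θ ^ β * X * Y = 0) :
    θ' / θ = c * (ρ * a - K) - a * c * θ ^ (β - 1) * (X * Y) := by
  rw [rpow_sub_one hθ.ne', div_eq_iff hθ.ne']
  field_simp
  linarith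

theorem IsMHJBSolution.fst_le_snd (hsol : IsMHJBSolution r μ σ ρ₁ ρ₂ γ α lam t₀ T θ₁ θ₂)
    (hαγ : 0 < α / (1 - γ)) (hl0 : 0 ≤ lam) (hl1 : lam ≤ 1) (hρ : ρ₂ ≤ ρ₁) :
    ∀ t ∈ Icc t₀ T, θ₁ t ≤ θ₂ t := by
  obtain ⟨θ₁', θ₂', -, -, hd₁, hd₂, hp₁, hp₂, hT₁, hT₂, heq₁, heq₂⟩ := hsol
  have hac : 0 < α⁻¹ * (1 - γ) := by
    rw [← div_eq_inv_mul, ← inv_div]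
    exact inv_pos.2 hαγ
  have hβ : (1 - γ - α) / (1 - γ) - 1 ≤ 0 := sub_nonpos.2 (sub_div_le_one_of_div_pos hαγ)
  have hlog := nonpos_of_hasDerivWithinAt_nonneg_of_pos (f := fun t => log (θ₁ t) - log (θ₂ t))
    (fun t ht => ((hd₁ t ht).log (hp₁ t ht).ne').sub ((hd₂ t ht).log (hp₂ t ht).ne'))
    (fun t ht hv => ?_) (by simp [hT₁, hT₂])
  · intro t ht
    have := hlog t ht
    rw [sub_nonpos, log_le_log_iff (hp₁ t ht) (hp₂ t ht)] at this
    exact this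
  · have ht' := Ioo_subset_Icc_self ht
    rw [sub_pos, log_lt_log_iff (hp₂ t ht') (hp₁ t ht')] at hv
    have hS := mhjbS_pos hl0 hl1 (hp₁ t ht') (hp₂ t ht')
    have hD := mhjbD_pos (γ := γ) (α := α) hl0 hl1 (hp₁ t ht') (hp₂ t ht')
    have hE := mul_pos (rpow_pos_of_pos hS (α / (α - 1))) (rpow_pos_of_pos hD (-(α / (α - 1))))
    have hmono := rpow_le_rpow_of_nonpos (hp₂ t ht') hv.le hβ
    rw [mhjb_div_eq (hp₁ t ht') (heq₁ t ht'), mhjb_div_eq (hp₂ t ht') (heq₂ t ht')]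
    nlinarith [mul_le_mul_of_nonneg_left hmono (mul_pos hac hE).le,
      mul_le_mul_of_nonneg_left (sub_nonneg.2 hρ) hac.le]

theorem IsMHJBSolution.exp_le_fst (hsol : IsMHJBSolution r μ σ ρ₁ ρ₂ γ α lam t₀ T θ₁ θ₂)
    (hα1 : α ≠ 1) (hαγ : 0 < α / (1 - γ)) (hsgn : 0 ≤ (1 / α - 1) * (1 - γ))
    (hl0 : 0 ≤ lam) (hl1 : lam ≤ 1) (hρ : ρ₂ ≤ ρ₁) (ht₀ : 0 ≤ t₀) :
    ∀ t ∈ Icc t₀ T,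
      exp (-T * |1 - γ| * |r - ρ₁ / α + (μ - r) ^ 2 / (2 * γ * σ ^ 2)|) ≤ θ₁ t := by
  have hle := hsol.fst_le_snd hαγ hl0 hl1 hρ
  obtain ⟨θ₁', θ₂', -, -, hd₁, -, hp₁, hp₂, hT₁, -, heq₁, -⟩ := hsol
  set κ := |1 - γ| * |r - ρ₁ / α + (μ - r) ^ 2 / (2 * γ * σ ^ 2)|
  have hκ : 0 ≤ κ := by positivity
  have hgrowth : ∀ t ∈ Ioo t₀ T, θ₁' t ≤ κ * θ₁ t := by
    intro t ht
    have ht' := Ioo_subset_Icc_self ht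
    have hcons := mul_mhjbC_mul_le hα1 hαγ hsgn hl0 hl1 (hp₁ t ht') (hp₂ t ht') (hle t ht')
    have hrate : -((1 - γ) * (r - ρ₁ / α + (μ - r) ^ 2 / (2 * γ * σ ^ 2))) ≤ κ := by
      calc _ ≤ |(1 - γ) * (r - ρ₁ / α + (μ - r) ^ 2 / (2 * γ * σ ^ 2))| := neg_le_abs _
        _ = κ := abs_mul _ _
    have := mul_le_mul_of_nonneg_right hrate (hp₁ t ht').le
    rw [div_eq_mul_inv ρ₁] at this
    linarith [heq₁ t ht']
  intro t ht
  have hθ := exp_mul_sub_mul_le_of_hasDerivWithinAt_le hd₁ hgrowth t ht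
  rw [hT₁, mul_one] at hθ
  calc exp (-T * |1 - γ| * |r - ρ₁ / α + (μ - r) ^ 2 / (2 * γ * σ ^ 2)|)
      = exp (-(κ * T)) := by simp only [κ]; ring_nf
    _ ≤ exp (κ * (t - T)) := exp_le_exp.2 (by nlinarith [ht.1])
    _ ≤ θ₁ t := hθ

end MHJB

theorem statement9_general (r μ σ ρ₁ ρ₂ γ α lam t₀ T : ℝ)
    (hα1 : α ≠ 1)
    (hαγ : 0 < α / (1 - γ)) (hsgn : 0 ≤ (1 / α - 1) * (1 - γ))
    (hl0 : 0 ≤ lam) (hl1 : lam ≤ 1) (hρ : ρ₂ ≤ ρ₁)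
    (ht₀ : 0 ≤ t₀) (θ₁ θ₂ : ℝ → ℝ)
    (hsol : IsMHJBSolution r μ σ ρ₁ ρ₂ γ α lam t₀ T θ₁ θ₂) :
    ∀ t ∈ Set.Icc t₀ T,
      0 < Real.exp (-T * |1 - γ| * |r - ρ₁ / α + (μ - r) ^ 2 / (2 * γ * σ ^ 2)|) ∧
      Real.exp (-T * |1 - γ| * |r - ρ₁ / α + (μ - r) ^ 2 / (2 * γ * σ ^ 2)|) ≤ θ₁ t ∧
      θ₁ t ≤ θ₂ t :=
  fun t ht => ⟨exp_pos _, hsol.exp_le_fst hα1 hαγ hsgn hl0 hl1 hρ ht₀ t ht,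
    hsol.fst_le_snd hαγ hl0 hl1 hρ t ht⟩

/-- Proposition of Section 5.2, lower-bound step: for a positive solution of (M-HJB)
with `ρ₁ ≥ ρ₂` and `(1/α - 1)(1-γ) ≥ 0`, one has
`θ₂(t) ≥ θ₁(t) ≥ δ > 0` on `[t₀, T]`, where
`δ = exp(-T |1-γ| |r - ρ₁/α + (μ-r)²/(2γσ²)|)`. -/
theorem statement9 (r μ σ ρ₁ ρ₂ γ α lam t₀ T : ℝ)
    (hσ : σ ≠ 0) (hγ : 0 < γ) (hγ1 : γ ≠ 1) (hα0 : α ≠ 0) (hα1 : α ≠ 1)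
    (hαγ : 0 < α / (1 - γ)) (hsgn : 0 ≤ (1 / α - 1) * (1 - γ))
    (hl0 : 0 ≤ lam) (hl1 : lam ≤ 1) (hρ : ρ₂ ≤ ρ₁)
    (ht₀ : 0 ≤ t₀) (ht₀T : t₀ < T) (θ₁ θ₂ : ℝ → ℝ)
    (hsol : IsMHJBSolution r μ σ ρ₁ ρ₂ γ α lam t₀ T θ₁ θ₂) :
    ∀ t ∈ Set.Icc t₀ T,
      0 < Real.exp (-T * |1 - γ| * |r - ρ₁ / α + (μ - r) ^ 2 / (2 * γ * σ ^ 2)|) ∧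
      Real.exp (-T * |1 - γ| * |r - ρ₁ / α + (μ - r) ^ 2 / (2 * γ * σ ^ 2)|) ≤ θ₁ t ∧
      θ₁ t ≤ θ₂ t :=
  statement9_general r μ σ ρ₁ ρ₂ γ α lam t₀ T hα1 hαγ hsgn hl0 hl1 hρ ht₀ θ₁ θ₂ hsol
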